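/- arXiv:2207.00981 — 3 statements merged into one kernel-verified Lean document; each statement's English description precedes it below -/
import Mathlib

section
/- (Frobenius's formula) Let G be a finite group and C_1, …, C_r conjugacy classes of G. The number of r-tuples (g_1, …, g_r) ∈ C_1 × ⋯ × C_r with g_1 g_2 ⋯ g_r = 1 equals (|C_1| ⋯ |C_r| / |G|) · Σ_χ χ(C_1) ⋯ χ(C_r) / χ(1)^{r−2}, where the sum ranges over the irreducible complex characters χ of G and χ(C_i) denotes the value of χ on elements of C_i. -/
/-!
Writing the indicator of `g₁ ⋯ gᵣ = 1` through the column orthogonality relation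
`∑_χ χ(1) χ(x) = |G| δ_{x,1}`, the count becomes `|G|⁻¹ ∑_χ χ(1) ∑_{gᵢ ∈ Cᵢ} χ(g₁ ⋯ gᵣ)`.
By Schur's lemma the central element `∑_{s ∈ C} s` acts on an irreducible representation as the
scalar `|C| χ(C) / χ(1)`, so the inner sum factors as `∏ᵢ (|Cᵢ| χ(Cᵢ) / χ(1)) ⋅ χ(1)`.
Column orthogonality itself comes from decomposing the regular representation, whose character
is `|G| δ_{x,1}`, into irreducibles: by row orthogonality each `χ` occurs with multiplicity `χ(1)`.
-/

open CategoryTheory Module Finset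

universe u

theorem Finset.sum_piFinset_ofFn_prod_mul {G R : Type*} [Monoid G] [DecidableEq G]
    [CommSemiring R] (φ : G → R) {n : ℕ} (A : Fin n → Finset G) (a : Fin n → R)
    (hA : ∀ i h, ∑ s ∈ A i, φ (s * h) = a i * φ h) (h : G) :
    ∑ t ∈ Fintype.piFinset A, φ ((List.ofFn t).prod * h) = (∏ i, a i) * φ h := by
  induction n generalizing h with
  | zero => simp
  | succ n ih =>
    have hsplit : Fintype.piFinset A =
        (A 0 ×ˢ Fintype.piFinset (Fin.tail A)).map (Fin.consEquiv fun _ => G).toEmbedding := by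
      simpa using filter_piFinset_eq_map_consEquiv A (fun _ => True)
    rw [hsplit, sum_map, sum_product, sum_comm]
    calc _ = ∑ t ∈ Fintype.piFinset (Fin.tail A), a 0 * φ ((List.ofFn t).prod * h) :=
          sum_congr rfl fun t _ => by simp [List.ofFn_succ, mul_assoc, hA 0]
      _ = _ := by
          rw [← mul_sum, ih (Fin.tail A) (Fin.tail a) (fun i => hA i.succ), Fin.prod_univ_succ,
            mul_assoc]
          rfl

namespace Representation

variable {k G V : Type*} [Field k] [Monoid G] [AddCommGroup V] [Module k V]

theorem char_ofMulAction {H : Type*} [MulAction G H] [Fintype H] [DecidableEq H] (g : G) :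
    (ofMulAction k G H).character g = #{h : H | g • h = h} := by
  rw [character, LinearMap.trace_eq_matrix_trace k (MonoidAlgebra.basis H k), Matrix.trace]
  simp only [Matrix.diag_apply, LinearMap.toMatrix_apply, MonoidAlgebra.basis_apply,
    ofMulAction_single]
  change ∑ h : H, (MonoidAlgebra.single (g • h) (1 : k)).coeff h = _
  simp [MonoidAlgebra.coeff_single, Finsupp.single_apply, sum_boole]

theorem char_eq_add_of_isCompl [FiniteDimensional k V] (ρ : Representation k G V)
    {p q : Subrepresentation ρ} (h : IsCompl p q) (g : G) :
    ρ.character g = p.toRepresentation.character g + q.toRepresentation.character g := by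
  have hpq : IsCompl p.toSubmodule q.toSubmodule :=
    ⟨disjoint_iff.mpr (congrArg Subrepresentation.toSubmodule h.inf_eq_bot),
      codisjoint_iff.mpr (congrArg Subrepresentation.toSubmodule h.sup_eq_top)⟩
  let N : Fin 2 → Submodule k V := ![p.toSubmodule, q.toSubmodule]
  have hN : DirectSum.IsInternal N :=
    (DirectSum.isInternal_submodule_iff_isCompl N zero_ne_one
      (by ext i; fin_cases i <;> simp)).mpr hpq
  have hmaps : ∀ i, Set.MapsTo (ρ g) (N i) (N i) := by
    simp only [Fin.forall_fin_two]
    exact ⟨fun v hv => p.apply_mem_toSubmodule g hv, fun v hv => q.apply_mem_toSubmodule g hv⟩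
  rw [character, LinearMap.trace_eq_sum_trace_restrict hN hmaps, Fin.sum_univ_two]
  rfl

theorem char_leftRegular {G : Type*} [Group G] [Fintype G] [DecidableEq G] (g : G) :
    (leftRegular k G).character g = if g = 1 then (Nat.card G : k) else 0 := by
  rw [char_ofMulAction]
  simp only [smul_eq_mul, mul_eq_right]
  split_ifs <;> simp [*]

end Representation

namespace FDRep

theorem char_one_ne_zero {k G : Type u} [Field k] [CharZero k] [Monoid G]
    (X : FDRep k G) [Simple X] : X.character 1 ≠ 0 := by
  rw [char_one, Nat.cast_ne_zero]
  intro h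
  have : Subsingleton X := Module.finrank_zero_iff.mp h
  exact id_nonzero X (by ext x; exact Subsingleton.elim _ _)

variable {k G : Type u} [Field k] [IsAlgClosed k] [Group G]

theorem exists_sum_char_mul_eq_mul (X : FDRep k G) [Simple X] {A : Finset G}
    (hA : ∀ g, ∀ s ∈ A, g * s * g⁻¹ ∈ A) :
    ∃ μ : k, ∀ h, ∑ s ∈ A, X.character (s * h) = μ * X.character h := by
  let T : X →ₗ[k] X := ∑ s ∈ A, X.ρ s
  have hT : ∀ g, T ∘ₗ X.ρ g = X.ρ g ∘ₗ T := by
    intro g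
    simp only [T, ← Module.End.mul_eq_comp, sum_mul, mul_sum, ← map_mul]
    refine sum_nbij' (fun s => g⁻¹ * s * g) (fun s => g * s * g⁻¹) ?_ ?_ ?_ ?_ ?_
    · intro s hs; simpa [mul_assoc] using hA g⁻¹ s hs
    · intro s hs; exact hA g s hs
    · intro s _; group
    · intro s _; group
    · intro s _; congr 1; group
  let f : X ⟶ X := ⟨FGModuleCat.ofHom T, fun g => by ext x; exact LinearMap.congr_fun (hT g) x⟩
  obtain ⟨μ, hμ⟩ := endomorphism_simple_eq_smul_id k f
  have hTμ : T = μ • LinearMap.id := congrArg (fun u : X ⟶ X => u.hom.hom.hom) hμ.symm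
  refine ⟨μ, fun h => ?_⟩
  calc ∑ s ∈ A, X.character (s * h) = LinearMap.trace k X (T * X.ρ h) := by
        simp [T, sum_mul, character]
    _ = μ * X.character h := by
        rw [hTμ]
        simp [character, ← Module.End.one_eq_id]

variable [CharZero k] [Fintype G]

theorem simple_of_isIrreducible {V : Type u} [AddCommGroup V] [Module k V]
    [FiniteDimensional k V] (ρ : Representation k G V) [ρ.IsIrreducible] :
    Simple (FDRep.of ρ) := by
  have : Invertible (Nat.card G : k) := invertibleOfNonzero (NeZero.ne _)
  have h := scalar_product_char_eq_finrank_equivariant (FDRep.of ρ) (FDRep.of ρ)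
  rw [simple_iff_end_is_rank_one, ← Nat.cast_inj (R := k), ← h, Nat.cast_one]
  exact (ρ.card_inv_mul_sum_char_mul_char_eq_finrank ρ).trans (by simp)

theorem sum_isConj_char_mul (X : FDRep k G) [Simple X] (c h : G)
    [DecidablePred (IsConj c)] :
    ∑ s with IsConj c s, X.character (s * h) =
      (Nat.card {x : G // IsConj c x} : k) * X.character c / X.character 1 * X.character h := by
  obtain ⟨μ, hμ⟩ := X.exists_sum_char_mul_eq_mul (A := {s | IsConj c s}) fun g s hs => by
    simp only [mem_filter, mem_univ, true_and] at hs ⊢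
    exact hs.trans (isConj_iff.mpr ⟨g, rfl⟩)
  have hclass : ∑ s with IsConj c s, X.character s =
      (Nat.card {x : G // IsConj c x} : k) * X.character c := by
    rw [Nat.card_eq_fintype_card, Fintype.card_subtype, ← nsmul_eq_mul, ← sum_const]
    refine sum_congr rfl fun s hs => ?_
    obtain ⟨g, rfl⟩ := isConj_iff.mp (mem_filter.mp hs).2
    exact char_conj X c g
  have hμ1 : ∑ s with IsConj c s, X.character s = μ * X.character 1 := by
    simpa using hμ 1
  rw [hμ h, eq_div_of_mul_eq (char_one_ne_zero X) (hμ1.symm.trans hclass)]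

variable {ι : Type*} [Fintype ι] (V : ι → FDRep k G)

theorem exists_char_eq_sum
    (hcomplete : ∀ W : FDRep k G, Simple W → ∃ i, Nonempty (V i ≅ W)) {W : Type u}
    [AddCommGroup W] [Module k W] [FiniteDimensional k W] (ρ : Representation k G W) :
    ∃ n : ι → ℕ, ∀ g, ρ.character g = ∑ i, n i * (V i).character g := by
  induction h : finrank k W using Nat.strong_induction_on generalizing W with
  | _ N ih =>
  classical
  subst h
  by_cases h0 : finrank k W = 0
  · refine ⟨0, fun g => ?_⟩
    have : Subsingleton W := Module.finrank_zero_iff.mp h0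
    simp [Representation.character, Subsingleton.elim (ρ g) 0]
  by_cases hirr : ∀ p : Subrepresentation ρ, p = ⊥ ∨ p = ⊤
  · have : Nontrivial W := Module.nontrivial_of_finrank_pos (Nat.pos_of_ne_zero h0)
    have : Nontrivial (Subrepresentation ρ) :=
      nontrivial_of_ne ⊥ ⊤ fun h => bot_ne_top (congrArg Subrepresentation.toSubmodule h)
    have : ρ.IsIrreducible := { eq_bot_or_eq_top := hirr }
    obtain ⟨i, ⟨e⟩⟩ := hcomplete _ (simple_of_isIrreducible ρ)
    refine ⟨fun j => if j = i then 1 else 0, fun g => ?_⟩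
    change (FDRep.of ρ).character g = _
    simp [← char_iso e]
  · simp only [not_forall, not_or] at hirr
    obtain ⟨p, hp_ne_bot, hp_ne_top⟩ := hirr
    -- Maschke: `Subrepresentation ρ` is a complemented lattice.
    obtain ⟨q, hpq⟩ := exists_isCompl p
    have hq_ne_top : q ≠ ⊤ := fun h => hp_ne_bot (eq_bot_of_top_isCompl (h ▸ hpq.symm))
    obtain ⟨np, hnp⟩ := ih _ (Submodule.finrank_lt fun h =>
      hp_ne_top (Subrepresentation.toSubmodule_injective h)) p.toRepresentation rfl
    obtain ⟨nq, hnq⟩ := ih _ (Submodule.finrank_lt fun h =>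
      hq_ne_top (Subrepresentation.toSubmodule_injective h)) q.toRepresentation rfl
    refine ⟨np + nq, fun g => ?_⟩
    simp [ρ.char_eq_add_of_isCompl hpq, hnp, hnq, add_mul, sum_add_distrib]

variable [∀ i, Simple (V i)] (hdistinct : ∀ i j, Nonempty (V i ≅ V j) → i = j)
include hdistinct

theorem card_inv_mul_sum_mul_char_inv_eq_of_eq_sum {χ : G → k} {n : ι → ℕ}
    (hχ : ∀ g, χ g = ∑ i, n i * (V i).character g) (j : ι) :
    (Nat.card G : k)⁻¹ * ∑ g, χ g * (V j).character g⁻¹ = n j := by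
  classical
  have : Invertible (Nat.card G : k) := invertibleOfNonzero (NeZero.ne _)
  have horth : ∀ i, (Nat.card G : k)⁻¹ * ∑ g, (V i).character g * (V j).character g⁻¹ =
      if i = j then 1 else 0 := by
    intro i
    rw [char_orthonormal]
    by_cases hij : i = j
    · subst hij
      rw [if_pos ⟨Iso.refl _⟩, if_pos rfl]
    · rw [if_neg fun h => hij (hdistinct i j h), if_neg hij]
  calc _ = ∑ i, (n i : k) *
        ((Nat.card G : k)⁻¹ * ∑ g, (V i).character g * (V j).character g⁻¹) := by
        simp only [hχ, sum_mul, mul_sum]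
        rw [sum_comm]
        exact sum_congr rfl fun i _ => sum_congr rfl fun g _ => by ring
    _ = n j := by simp only [horth, mul_ite, mul_one, mul_zero, sum_ite_eq', mem_univ, if_true]

theorem sum_char_one_mul_char [DecidableEq G]
    (hcomplete : ∀ W : FDRep k G, Simple W → ∃ i, Nonempty (V i ≅ W)) (x : G) :
    ∑ i, (V i).character 1 * (V i).character x = if x = 1 then (Nat.card G : k) else 0 := by
  obtain ⟨n, hn⟩ := exists_char_eq_sum V hcomplete (Representation.leftRegular k G)
  have hn_eq : ∀ i, (n i : k) = (V i).character 1 := by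
    intro i
    rw [← card_inv_mul_sum_mul_char_inv_eq_of_eq_sum V hdistinct hn i]
    simp [Representation.char_leftRegular, ite_mul]
  rw [← Representation.char_leftRegular, hn]
  simp [hn_eq]

end FDRep

open FDRep

/-- **Frobenius's formula.**  For conjugacy classes `C_1, …, C_r` of a finite group `G`
(here `C_i` is the conjugacy class of `c i`), the number of tuples
`(g_1, …, g_r) ∈ C_1 × ⋯ × C_r` with `g_1 ⋯ g_r = 1` equals
`(|C_1| ⋯ |C_r| / |G|) ⋅ Σ_χ χ(C_1) ⋯ χ(C_r) / χ(1)^{r-2}`, the sum being over the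
irreducible complex characters of `G` (indexed by a complete family `V` of pairwise
non-isomorphic irreducible representations). -/
theorem frobenius_formula {G : Type} [Group G] [Fintype G] {r : ℕ} (c : Fin r → G)
    (ι : Type) [Fintype ι] (V : ι → FDRep ℂ G)
    (hsimple : ∀ k, Simple (V k))
    (hdistinct : ∀ k l, Nonempty (V k ≅ V l) → k = l)
    (hcomplete : ∀ W : FDRep ℂ G, Simple W → ∃ k, Nonempty (V k ≅ W)) :
    (Nat.card {t : Fin r → G //
        (∀ i, IsConj (c i) (t i)) ∧ (List.ofFn t).prod = 1} : ℂ) =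
      (∏ i, (Nat.card {x : G // IsConj (c i) x} : ℂ)) / (Fintype.card G : ℂ) *
        ∑ k, (∏ i, (V k).character (c i)) / ((V k).character 1) ^ ((r : ℤ) - 2) := by
  classical
  have := hsimple
  set C : Fin r → Finset G := fun i => {s | IsConj (c i) s}
  have hcount : (Nat.card {t : Fin r → G //
      (∀ i, IsConj (c i) (t i)) ∧ (List.ofFn t).prod = 1} : ℂ) =
        ∑ t ∈ Fintype.piFinset C, if (List.ofFn t).prod = 1 then 1 else 0 := by
    rw [sum_boole, Nat.card_eq_fintype_card, Fintype.card_subtype]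
    congr 2
    ext t
    simp [C]
  have hclass : ∀ k h, ∑ t ∈ Fintype.piFinset C, (V k).character ((List.ofFn t).prod * h) =
      (∏ i, (Nat.card {x : G // IsConj (c i) x} : ℂ) * (V k).character (c i) /
        (V k).character 1) * (V k).character h :=
    fun k => sum_piFinset_ofFn_prod_mul _ C _ fun i h => sum_isConj_char_mul (V k) (c i) h
  have hcol : ∀ x : G, (if x = 1 then (1 : ℂ) else 0) =
      (Fintype.card G : ℂ)⁻¹ * ∑ k, (V k).character 1 * (V k).character (x * 1) := by
    intro x
    rw [mul_one, sum_char_one_mul_char V hdistinct hcomplete, Nat.card_eq_fintype_card,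
      mul_ite, mul_zero, inv_mul_cancel₀ (Nat.cast_ne_zero.mpr Fintype.card_ne_zero)]
  rw [hcount]
  calc _ = (Fintype.card G : ℂ)⁻¹ * ∑ k, (V k).character 1 *
        ∑ t ∈ Fintype.piFinset C, (V k).character ((List.ofFn t).prod * 1) := by
        rw [sum_congr rfl fun t _ => hcol _, ← mul_sum, sum_comm]
        simp_rw [mul_sum]
    _ = _ := by
        simp_rw [hclass, mul_sum]
        refine sum_congr rfl fun k _ => ?_
        have hd := char_one_ne_zero (V k)
        rw [prod_div_distrib, prod_mul_distrib, prod_const, card_univ, Fintype.card_fin,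
          zpow_sub₀ hd, zpow_natCast]
        field_simp
end

section
/- (Scott's theorem) Let G be a finite group generated by g_1, …, g_n with g_1 g_2 ⋯ g_n = 1, and let V be a finite-dimensional representation of G over a field K. Then Σ_{i=1}^{n} codim(V^{g_i}) ≥ codim(V^G) + codim((V*)^G), where V^{g} is the fixed subspace of g acting on V, V^G is the subspace of G-invariants, and V* is the dual representation. -/
/-!
Let `q_j = g_1 ⋯ g_j` be the partial products, so `q_0 = q_n = 1`. On `Vⁿ` consider
`A (w_i) = ((g_i - 1) w_i)` and `B (w_i) = ∑ q_{i-1} w_i` (`piMapSubOne` and `partialProdSum`).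
Since `q_{i-1} (g_i - 1) = q_i - q_{i-1}`, `B ∘ A` vanishes on the diagonal `Δ` by telescoping, so
`rank (A ∘ Δ) + rank (B ∘ A) ≤ rank A ≤ ∑ rank (g_i - 1)`. The kernel of `A ∘ Δ` is `V^G` because
the `g_i` generate `G`. A functional killing the image of `B ∘ A` is fixed by every `q_i`, hence by
every `g_i`, hence lies in `(V*)^G`; so `rank (B ∘ A) = rank (B ∘ A)* ≥ codim (V*)^G`.
-/

open Module Submodule LinearMap

section RankInequalities

variable {K U V W X : Type*} [Field K] [AddCommGroup U] [Module K U] [AddCommGroup V] [Module K V]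
  [AddCommGroup W] [Module K W] [AddCommGroup X] [Module K X]

theorem LinearMap.finrank_sub_finrank_ker [FiniteDimensional K V] (f : V →ₗ[K] W) :
    finrank K V - finrank K (ker f) = finrank K (range f) := by
  have := f.finrank_range_add_finrank_ker
  omega

theorem LinearMap.finrank_range_comp_add_finrank_range_comp_le [FiniteDimensional K W]
    (C : U →ₗ[K] V) (A : V →ₗ[K] W) (B : W →ₗ[K] X) (h : B ∘ₗ A ∘ₗ C = 0) :
    finrank K (range (A ∘ₗ C)) + finrank K (range (B ∘ₗ A)) ≤ finrank K (range A) := by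
  set B' := B.domRestrict (range A)
  have hrange : range B' = range (B ∘ₗ A) := by rw [range_domRestrict, range_comp]
  have hker : range (A ∘ₗ C) ≤ (ker B').map (range A).subtype := by
    rintro _ ⟨u, rfl⟩
    exact ⟨⟨A (C u), A.mem_range_self _⟩, LinearMap.congr_fun h u, rfl⟩
  have hrank := B'.finrank_range_add_finrank_ker
  have hkerrank := Submodule.finrank_mono hker
  rw [hrange] at hrank
  rw [Submodule.finrank_map_subtype_eq] at hkerrank
  omega

theorem LinearMap.finrank_range_piMap_le {ι : Type*} [Fintype ι] {V W : ι → Type*}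
    [∀ i, AddCommGroup (V i)] [∀ i, Module K (V i)] [∀ i, AddCommGroup (W i)]
    [∀ i, Module K (W i)] [∀ i, FiniteDimensional K (W i)] (f : ∀ i, V i →ₗ[K] W i) :
    finrank K (range (piMap f)) ≤ ∑ i, finrank K (range (f i)) := by
  have hfactor :
      piMap f = piMap (fun i => (range (f i)).subtype) ∘ₗ piMap fun i => (f i).rangeRestrict :=
    rfl
  calc finrank K (range (piMap f))
      ≤ finrank K (range (piMap fun i => (range (f i)).subtype)) := by
        rw [hfactor, range_comp]; exact Submodule.finrank_mono map_le_range
    _ ≤ finrank K (∀ i, range (f i)) := finrank_range_le _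
    _ = ∑ i, finrank K (range (f i)) := finrank_pi_fintype K

end RankInequalities

theorem Fin.sum_univ_succ_sub_castSucc {M : Type*} [AddCommGroup M] :
    ∀ {n : ℕ} (f : Fin (n + 1) → M), ∑ i : Fin n, (f i.succ - f i.castSucc) = f (last n) - f 0
  | 0, _ => by simp
  | n + 1, f => by
    have ih := Fin.sum_univ_succ_sub_castSucc (f ∘ castSucc)
    simp only [Function.comp_apply] at ih
    rw [Fin.sum_univ_castSucc]
    simp only [Fin.succ_castSucc, ih]
    simp

namespace Representation

variable {K V G : Type*} [Field K] [AddCommGroup V] [Module K V] [Group G]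
  (ρ : Representation K G V)

theorem mem_invariants_iff_of_closure_eq_top {S : Set G} (hS : Subgroup.closure S = ⊤) (v : V) :
    v ∈ ρ.invariants ↔ ∀ s ∈ S, ρ s v = v := by
  refine ⟨fun hv s _ => hv s, fun hfix x => ?_⟩
  have hx : x ∈ Subgroup.closure S := hS ▸ Subgroup.mem_top x
  induction hx using Subgroup.closure_induction with
  | mem s hs => exact hfix s hs
  | one => simp
  | mul a b _ _ ha hb => rw [map_mul, Module.End.mul_apply, hb, ha]
  | inv a _ ha => rw [← ha, ← Module.End.mul_apply, ← map_mul, inv_mul_cancel, map_one, ha]; rfl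

theorem mem_dual_invariants_iff_of_closure_eq_top {S : Set G} (hS : Subgroup.closure S = ⊤)
    (f : Dual K V) : f ∈ ρ.dual.invariants ↔ ∀ s ∈ S, f ∘ₗ ρ s = f := by
  have (s : G) : ρ.dual s⁻¹ f = f ∘ₗ ρ s := by rw [dual_apply, inv_inv]; rfl
  rw [ρ.dual.mem_invariants_iff_of_closure_eq_top (S := S⁻¹) (by rwa [Subgroup.closure_inv])]
  refine ⟨fun h s hs => ?_, fun h s hs => ?_⟩
  · rw [← this]; exact h s⁻¹ (Set.inv_mem_inv.mpr hs)
  · rw [← inv_inv s, this]; exact h s⁻¹ hs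

variable {n : ℕ} (g : Fin n → G)

def piMapSubOne : (Fin n → V) →ₗ[K] (Fin n → V) := piMap fun i => ρ (g i) - LinearMap.id

def partialProdSum : (Fin n → V) →ₗ[K] V := ∑ i, ρ (Fin.partialProd g i.castSucc) ∘ₗ proj i

theorem partialProdSum_piMapSubOne_apply (w : Fin n → V) :
    ρ.partialProdSum g (ρ.piMapSubOne g w) =
      ∑ i, (ρ (Fin.partialProd g i.succ) (w i) - ρ (Fin.partialProd g i.castSucc) (w i)) := by
  simp [partialProdSum, piMapSubOne, Fin.partialProd_succ]

theorem partialProdSum_comp_piMapSubOne_comp_const (hprod : (List.ofFn g).prod = 1) :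
    ρ.partialProdSum g ∘ₗ ρ.piMapSubOne g ∘ₗ LinearMap.const = 0 := by
  ext v
  have hlast : Fin.partialProd g (Fin.last n) = 1 := by
    rw [Fin.partialProd, Fin.val_last, List.take_of_length_le (by simp), hprod]
  simp [partialProdSum_piMapSubOne_apply,
    Fin.sum_univ_succ_sub_castSucc (fun j => ρ (Fin.partialProd g j) v), hlast]

theorem ker_piMapSubOne_comp_const (hgen : Subgroup.closure (Set.range g) = ⊤) :
    ker (ρ.piMapSubOne g ∘ₗ LinearMap.const) = ρ.invariants := by
  ext v
  simp [ρ.mem_invariants_iff_of_closure_eq_top hgen, piMapSubOne, funext_iff, sub_eq_zero]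

theorem ker_dualMap_partialProdSum_comp_piMapSubOne_le
    (hgen : Subgroup.closure (Set.range g) = ⊤) :
    ker (ρ.partialProdSum g ∘ₗ ρ.piMapSubOne g).dualMap ≤ ρ.dual.invariants := by
  intro f hf
  have hstep (i : Fin n) :
      f ∘ₗ ρ (Fin.partialProd g i.succ) = f ∘ₗ ρ (Fin.partialProd g i.castSucc) := by
    ext v
    classical
    have := LinearMap.congr_fun hf (Pi.single i v)
    rw [dualMap_apply, comp_apply, partialProdSum_piMapSubOne_apply, Finset.sum_eq_single i] at this
    · simpa [sub_eq_zero] using this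
    · intro j _ hj; simp [hj]
    · simp
  have hfix (j : Fin (n + 1)) : f ∘ₗ ρ (Fin.partialProd g j) = f := by
    induction j using Fin.induction with
    | zero => simp [Module.End.one_eq_id]
    | succ i ih => rw [hstep, ih]
  rw [ρ.mem_dual_invariants_iff_of_closure_eq_top hgen]
  rintro _ ⟨i, rfl⟩
  calc f ∘ₗ ρ (g i) = (f ∘ₗ ρ (Fin.partialProd g i.castSucc)) ∘ₗ ρ (g i) := by rw [hfix]
    _ = f ∘ₗ ρ (Fin.partialProd g i.succ) := by
      rw [Fin.partialProd_succ, map_mul, Module.End.mul_eq_comp, comp_assoc]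
    _ = f := hfix i.succ

end Representation

/-- **Scott's theorem.**  If a group `G` is generated by `g_1, …, g_n` with
`g_1 ⋯ g_n = 1` and `V` is a finite-dimensional representation of `G` over a field `K`,
then `Σ_i codim V^{g_i} ≥ codim V^G + codim (V*)^G`. -/
theorem scott_inequality {K : Type*} [Field K] {V : Type*} [AddCommGroup V] [Module K V]
    [FiniteDimensional K V] {G : Type*} [Group G] (ρ : Representation K G V)
    {n : ℕ} (g : Fin n → G)
    (hgen : Subgroup.closure (Set.range g) = ⊤)
    (hprod : (List.ofFn g).prod = 1) :
    (Module.finrank K V - Module.finrank K ρ.invariants) +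
      (Module.finrank K (Module.Dual K V) - Module.finrank K ρ.dual.invariants) ≤
    ∑ i, (Module.finrank K V -
      Module.finrank K (LinearMap.ker (ρ (g i) - (LinearMap.id : V →ₗ[K] V)))) := by
  have hinv : finrank K V - finrank K ρ.invariants =
      finrank K (range (ρ.piMapSubOne g ∘ₗ LinearMap.const)) := by
    rw [← ρ.ker_piMapSubOne_comp_const g hgen, finrank_sub_finrank_ker]
  have hdual : finrank K (Dual K V) - finrank K ρ.dual.invariants ≤
      finrank K (range (ρ.partialProdSum g ∘ₗ ρ.piMapSubOne g)) := by
    rw [← finrank_range_dualMap_eq_finrank_range, ← finrank_sub_finrank_ker]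
    have := Submodule.finrank_mono (ρ.ker_dualMap_partialProdSum_comp_piMapSubOne_le g hgen)
    omega
  calc (finrank K V - finrank K ρ.invariants) +
        (finrank K (Dual K V) - finrank K ρ.dual.invariants)
      ≤ finrank K (range (ρ.piMapSubOne g ∘ₗ LinearMap.const)) +
          finrank K (range (ρ.partialProdSum g ∘ₗ ρ.piMapSubOne g)) := add_le_add hinv.le hdual
    _ ≤ finrank K (range (ρ.piMapSubOne g)) :=
        finrank_range_comp_add_finrank_range_comp_le _ _ _
          (ρ.partialProdSum_comp_piMapSubOne_comp_const g hprod)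
    _ ≤ ∑ i, finrank K (range (ρ (g i) - LinearMap.id)) := finrank_range_piMap_le _
    _ = _ := by simp only [finrank_sub_finrank_ker]
end

section
/- Let g_1, …, g_r ∈ Σ_4 with each g_i of order 2, g_1 ⋯ g_r = 1, and ⟨g_1, …, g_r⟩ = Σ_4. If k is the number of indices i for which g_i is a transposition, then k ≥ 4. -/
/-!
Every element of order `2` of `Σ₄` is a transposition (odd) or lies in the Klein subgroup `V₄`
(even). The sign of `g₁ ⋯ gᵣ = 1` shows that the number `k` of transpositions is even. If
`k ≤ 2`, then in `Σ₄ ⧸ V₄ ≅ Σ₃` at most two of the images of the `gᵢ` are nontrivial, and since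
their product is `1` they are mutually inverse; so the images generate a cyclic group, whereas
they generate the non-abelian group `Σ₄ ⧸ V₄`.
-/

open Equiv Equiv.Perm

theorem List.countP_ofFn {α : Type*} {n : ℕ} (f : Fin n → α) (p : α → Bool) :
    (List.ofFn f).countP p = Nat.card {i // p (f i)} := by
  classical
  rw [List.ofFn_eq_map, List.countP_map, Nat.card_eq_fintype_card, Fintype.card_subtype,
    ← List.toFinset_finRange, (List.nodup_finRange n).card_eq_countP]
  simp [Function.comp_def]

theorem List.exists_forall_mem_zpowers_of_prod_eq_one {G : Type*} [Group G] [DecidableEq G]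
    {l : List G} (hprod : l.prod = 1) (hl : l.countP (· != 1) ≤ 2) :
    ∃ a, ∀ x ∈ l, x ∈ Subgroup.zpowers a := by
  set l' := l.filter (· != 1)
  have hprod' : l'.prod = 1 := by rw [List.prod_filter_bne_one, hprod]
  have hlen : l'.length ≤ 2 := by rwa [← List.countP_eq_length_filter]
  obtain ⟨a, ha⟩ : ∃ a, ∀ y ∈ l', y ∈ Subgroup.zpowers a := by
    clear_value l'
    match l', hprod', hlen with
    | [], _, _ => exact ⟨1, by simp⟩
    | [a], _, _ => exact ⟨a, by simp [Subgroup.mem_zpowers]⟩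
    | [a, b], h, _ =>
      rw [List.prod_pair, mul_eq_one_iff_eq_inv] at h
      exact ⟨a, by simp [Subgroup.mem_zpowers, h]⟩
  refine ⟨a, fun x hx => ?_⟩
  by_cases h : x = 1
  · exact h ▸ Subgroup.one_mem _
  · exact ha x (List.mem_filter.2 ⟨hx, by simpa using h⟩)

theorem exists_forall_mem_zpowers_of_prod_ofFn_eq_one {G : Type*} [Group G] {r : ℕ}
    (f : Fin r → G) (hprod : (List.ofFn f).prod = 1) (hf : Nat.card {i // f i ≠ 1} ≤ 2) :
    ∃ a, ∀ i, f i ∈ Subgroup.zpowers a := by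
  classical
  obtain ⟨a, ha⟩ := List.exists_forall_mem_zpowers_of_prod_eq_one hprod <| by
    simpa [List.countP_ofFn] using hf
  exact ⟨a, fun i => ha _ (List.mem_ofFn.2 ⟨i, rfl⟩)⟩

theorem QuotientGroup.isCyclic_of_forall_mem_zpowers {G : Type*} [Group G] {N : Subgroup G}
    [N.Normal] {s : Set G} (hs : Subgroup.closure s = ⊤) (a : G ⧸ N)
    (ha : ∀ x ∈ s, (x : G ⧸ N) ∈ Subgroup.zpowers a) : IsCyclic (G ⧸ N) := by
  refine ⟨a, fun x => ?_⟩
  obtain ⟨x, rfl⟩ := QuotientGroup.mk_surjective x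
  have hle : Subgroup.closure s ≤ (Subgroup.zpowers a).comap (QuotientGroup.mk' N) :=
    (Subgroup.closure_le _).2 ha
  exact hle (hs ▸ Subgroup.mem_top x)

theorem sign_prod_ofFn_eq_neg_one_pow_card_isSwap {α : Type*} [DecidableEq α] [Fintype α]
    {r : ℕ} (g : Fin r → Perm α) (hg : ∀ i, ¬(g i).IsSwap → sign (g i) = 1) :
    sign (List.ofFn g).prod = (-1) ^ Nat.card {i // (g i).IsSwap} := by
  classical
  have hsign : ∀ i ∈ Finset.univ, sign (g i) = if (g i).IsSwap then -1 else 1 := fun i _ => by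
    split_ifs with h
    exacts [h.sign_eq, hg i h]
  calc sign (List.ofFn g).prod = ∏ i, sign (g i) := by
        rw [map_list_prod, List.map_ofFn, List.prod_ofFn, Function.comp_def]
    _ = ∏ i, if (g i).IsSwap then -1 else 1 := Finset.prod_congr rfl hsign
    _ = (-1) ^ Nat.card {i // (g i).IsSwap} := by
        rw [Finset.prod_ite, Finset.prod_const, Finset.prod_const_one, mul_one,
          Nat.card_eq_fintype_card, Fintype.card_subtype]

set_option maxRecDepth 2000 in
def kleinFour : Subgroup (Perm (Fin 4)) where
  carrier := {σ | σ ^ 2 = 1 ∧ sign σ = 1}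
  one_mem' := by decide
  mul_mem' {σ τ} hσ hτ := ⟨(by decide : ∀ σ τ : Perm (Fin 4), σ ^ 2 = 1 → sign σ = 1 →
      τ ^ 2 = 1 → sign τ = 1 → (σ * τ) ^ 2 = 1) σ τ hσ.1 hσ.2 hτ.1 hτ.2,
    by rw [Perm.sign_mul, hσ.2, hτ.2, one_mul]⟩
  inv_mem' {σ} hσ := ⟨by rw [inv_pow, hσ.1, inv_one], by rw [sign_inv, hσ.2]⟩

theorem mem_kleinFour {σ : Perm (Fin 4)} : σ ∈ kleinFour ↔ σ ^ 2 = 1 ∧ sign σ = 1 :=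
  Iff.rfl

instance : kleinFour.Normal where
  conj_mem σ hσ τ := ⟨by rw [conj_pow, hσ.1, mul_one, mul_inv_cancel], by simp [hσ.2]⟩

theorem mem_kleinFour_iff_not_isSwap {σ : Perm (Fin 4)} (hσ : σ ^ 2 = 1) :
    σ ∈ kleinFour ↔ ¬σ.IsSwap := by
  refine ⟨fun h hswap => ?_, fun hswap => ⟨hσ, ?_⟩⟩
  · simp [mem_kleinFour, hswap.sign_eq] at h
  · rw [← card_support_eq_two] at hswap
    revert σ
    decide

theorem mk_kleinFour_ne_one_iff_isSwap {σ : Perm (Fin 4)} (hσ : σ ^ 2 = 1) :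
    (σ : Perm (Fin 4) ⧸ kleinFour) ≠ 1 ↔ σ.IsSwap := by
  rw [Ne, QuotientGroup.eq_one_iff, mem_kleinFour_iff_not_isSwap hσ, not_not]

theorem not_isCyclic_quotient_kleinFour : ¬IsCyclic (Perm (Fin 4) ⧸ kleinFour) := by
  intro _
  have hcomm := isMulCommutative_iff.1 IsCyclic.isMulCommutative
    ((swap 0 1 : Perm (Fin 4)) : Perm (Fin 4) ⧸ kleinFour) (swap 1 2 : Perm (Fin 4))
  rw [← QuotientGroup.mk_mul, ← QuotientGroup.mk_mul, QuotientGroup.eq, mem_kleinFour] at hcomm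
  revert hcomm
  decide

/-- If `g_1, …, g_r ∈ Σ_4` all have order `2`, satisfy `g_1 ⋯ g_r = 1` and generate
`Σ_4`, then the number `k` of indices `i` for which `g_i` is a transposition is at
least `4`. -/
theorem number_of_transpositions_ge_four {r : ℕ} (g : Fin r → Equiv.Perm (Fin 4))
    (h2 : ∀ i, orderOf (g i) = 2) (hprod : (List.ofFn g).prod = 1)
    (hgen : Subgroup.closure (Set.range g) = ⊤) :
    4 ≤ Nat.card {i : Fin r // (g i).IsSwap} := by
  have hsq (i : Fin r) : g i ^ 2 = 1 := h2 i ▸ pow_orderOf_eq_one (g i)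
  have hsign (i : Fin r) (h : ¬(g i).IsSwap) : sign (g i) = 1 :=
    ((mem_kleinFour_iff_not_isSwap (hsq i)).2 h).2
  have heven : Even (Nat.card {i // (g i).IsSwap}) := by
    rw [← neg_one_pow_eq_one_iff_even (R := ℤˣ) (by decide),
      ← sign_prod_ofFn_eq_neg_one_pow_card_isSwap g hsign, hprod, map_one]
  by_contra! hlt
  let q := QuotientGroup.mk' kleinFour ∘ g
  have hcard : Nat.card {i // q i ≠ 1} ≤ 2 := by
    refine (Nat.card_congr (Equiv.subtypeEquivRight fun i =>
      mk_kleinFour_ne_one_iff_isSwap (hsq i))).trans_le ?_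
    obtain ⟨m, hm⟩ := heven
    omega
  obtain ⟨a, ha⟩ := exists_forall_mem_zpowers_of_prod_ofFn_eq_one q
    (by rw [← List.map_ofFn, ← map_list_prod, hprod, map_one]) hcard
  exact not_isCyclic_quotient_kleinFour <|
    QuotientGroup.isCyclic_of_forall_mem_zpowers hgen a (Set.forall_mem_range.2 ha)
end
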